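/- arXiv:1412.8063 — 6 statements merged into one kernel-verified Lean document; each statement's English description precedes it below -/
import Mathlib

section
/- Let Ŝ be the τ-nice sampling on [n] with 1 ≤ τ ≤ n. Then its probability matrix is P = (τ/n)((1−β)I + βE), where β = (τ−1)/max(n−1,1), I is the identity and E the all-ones matrix. -/
open Finset Matrix BigOperators

/-- Probability matrix of a sampling given by its probability mass function `p` on
subsets of `[n]`: `P i j = Prob({i,j} ⊆ Ŝ)`. -/
noncomputable def probMatrixPMF {n : ℕ} (p : Finset (Fin n) → ℝ) : Matrix (Fin n) (Fin n) ℝ :=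
  fun i j => ∑ S : Finset (Fin n), if i ∈ S ∧ j ∈ S then p S else 0

/-- The τ-nice sampling: uniform over subsets of cardinality τ. -/
noncomputable def tauNice (n τ : ℕ) : Finset (Fin n) → ℝ :=
  fun S => if S.card = τ then 1 / (n.choose τ : ℝ) else 0

/-! `P i j` is the probability that `Ŝ` covers the set `{i, j}`. A fixed `t`-set lies in
`C(n - t, τ - t)` of the `C(n, τ)` subsets of size `τ`, so it is covered with probability
`τ⁽ᵗ⁾ / n⁽ᵗ⁾` (falling factorials, which also vanish correctly when `τ < t`). Taking `t = 1` on
the diagonal and `t = 2` off it gives `τ / n` and `τ (τ - 1) / (n (n - 1))`. -/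

theorem Nat.choose_sub_mul_descFactorial {n τ t : ℕ} (htτ : t ≤ τ) :
    (n - t).choose (τ - t) * n.descFactorial t = n.choose τ * τ.descFactorial t := by
  rw [Nat.descFactorial_eq_factorial_mul_choose, Nat.descFactorial_eq_factorial_mul_choose]
  linear_combination t.factorial * (Nat.choose_mul (n := n) htτ).symm

theorem Finset.card_filter_powersetCard_subset_mul_descFactorial {α : Type*} [DecidableEq α]
    {s t : Finset α} (hts : t ⊆ s) (τ : ℕ) :
    #{S ∈ s.powersetCard τ | t ⊆ S} * (#s).descFactorial #t = (#s).choose τ * τ.descFactorial #t := by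
  by_cases htτ : #t ≤ τ
  · rw [card_filter_powersetCard_subset t s τ hts htτ, Nat.choose_sub_mul_descFactorial htτ]
  · have hempty : {S ∈ s.powersetCard τ | t ⊆ S} = ∅ := by
      refine filter_eq_empty_iff.2 fun S hS htS => htτ ?_
      exact (mem_powersetCard.1 hS).2 ▸ card_le_card htS
    rw [hempty, Nat.descFactorial_eq_zero_iff_lt.2 (not_le.1 htτ)]
    simp

theorem probMatrixPMF_apply {n : ℕ} (p : Finset (Fin n) → ℝ) (i j : Fin n) :
    probMatrixPMF p i j = ∑ S with {i, j} ⊆ S, p S := by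
  simp [probMatrixPMF, sum_filter, insert_subset_iff]

theorem sum_tauNice_filter_subset {n τ : ℕ} (hτn : τ ≤ n) (T : Finset (Fin n)) :
    ∑ S with T ⊆ S, tauNice n τ S = (τ.descFactorial #T : ℝ) / n.descFactorial #T := by
  have hchoose : (n.choose τ : ℝ) ≠ 0 := by exact_mod_cast (Nat.choose_pos hτn).ne'
  have hdesc : (n.descFactorial #T : ℝ) ≠ 0 := by
    refine Nat.cast_ne_zero.2 (Nat.descFactorial_eq_zero_iff_lt.not.2 (not_lt.2 ?_))
    simpa using card_le_univ T
  have hcount := card_filter_powersetCard_subset_mul_descFactorial (subset_univ T) τ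
  rw [card_univ, Fintype.card_fin] at hcount
  rw [eq_div_iff hdesc]
  simp only [tauNice, ← sum_filter, sum_const, nsmul_eq_mul]
  have hsets : {S ∈ ({S | T ⊆ S} : Finset (Finset (Fin n))) | #S = τ} =
      {S ∈ powersetCard τ (univ : Finset (Fin n)) | T ⊆ S} := by
    ext S
    simp [and_comm]
  rw [hsets]
  field_simp
  exact_mod_cast hcount

theorem probMatrix_tauNice_general {n τ : ℕ} (hτn : τ ≤ n) :
    probMatrixPMF (tauNice n τ) =
      ((τ : ℝ) / n) •
        ((1 - ((τ : ℝ) - 1) / (max (n - 1) 1 : ℕ)) • (1 : Matrix (Fin n) (Fin n) ℝ) +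
          (((τ : ℝ) - 1) / (max (n - 1) 1 : ℕ)) • (Matrix.of fun _ _ => (1:ℝ) : Matrix (Fin n) (Fin n) ℝ)) := by
  ext i j
  simp only [probMatrixPMF_apply, sum_tauNice_filter_subset hτn, Matrix.smul_apply, Matrix.add_apply,
    one_apply, of_apply, smul_eq_mul]
  rcases eq_or_ne i j with rfl | hij
  · rw [insert_eq_of_mem (mem_singleton_self i), card_singleton, Nat.descFactorial_one,
      Nat.descFactorial_one, if_pos rfl]
    ring
  · have hn : 2 ≤ n := by have := Fin.val_ne_of_ne hij; omega
    have hmax : ((max (n - 1) 1 : ℕ) : ℝ) = n - 1 := by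
      rw [max_eq_left (by omega), Nat.cast_sub (by omega), Nat.cast_one]
    rw [card_pair hij, Nat.cast_descFactorial_two, Nat.cast_descFactorial_two, if_neg hij, hmax]
    field_simp
    ring

theorem probMatrix_tauNice {n τ : ℕ} (hτ1 : 1 ≤ τ) (hτn : τ ≤ n) :
    probMatrixPMF (tauNice n τ) =
      ((τ : ℝ) / n) •
        ((1 - ((τ : ℝ) - 1) / (max (n - 1) 1 : ℕ)) • (1 : Matrix (Fin n) (Fin n) ℝ) +
          (((τ : ℝ) - 1) / (max (n - 1) 1 : ℕ)) • (Matrix.of fun _ _ => (1:ℝ) : Matrix (Fin n) (Fin n) ℝ)) :=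
  probMatrix_tauNice_general hτn
end

section
/- Let Ŝ be a doubly uniform sampling of [n] with Prob(Ŝ = ∅) ≠ 1. Then its probability matrix is P = (E[|Ŝ|]/n)((1−β)I + βE) with β = (E[|Ŝ|²]/E[|Ŝ|] − 1)/max(n−1,1). -/
open Finset Matrix BigOperators

/-!
A doubly uniform sampling is invariant under relabelling `[n]` by a permutation, and the
permutation group acts transitively on the diagonal and on the ordered pairs of distinct
points. So `P` has a constant diagonal `d` and a constant off-diagonal entry `o`. Counting,
`trace P = E[|Ŝ|]` and `∑ᵢⱼ Pᵢⱼ = E[|Ŝ|²]` give `n d = E[|Ŝ|]` and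
`n (n - 1) o = E[|Ŝ|²] - E[|Ŝ|]`, which is the claimed formula.
-/

lemma Equiv.Perm.exists_apply_eq_and_apply_eq {α : Type*} [DecidableEq α] {i j k l : α}
    (hij : i ≠ j) (hkl : k ≠ l) : ∃ σ : Equiv.Perm α, σ i = k ∧ σ j = l := by
  set τ := Equiv.swap i k
  have hτj : τ j ≠ k := by simpa [τ] using τ.injective.ne hij.symm
  refine ⟨τ.trans (Equiv.swap (τ j) l), ?_, by simp⟩
  simp [τ, Equiv.swap_apply_of_ne_of_ne hτj.symm hkl]

lemma Matrix.sum_sum_eq_trace_add_sum_offDiag {ι R : Type*} [Fintype ι] [DecidableEq ι]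
    [AddCommMonoid R] (A : Matrix ι ι R) :
    ∑ i, ∑ j, A i j = A.trace + ∑ x ∈ (univ : Finset ι).offDiag, A x.1 x.2 := by
  rw [← sum_product' (f := fun i j => A i j), ← diag_union_offDiag,
    sum_union (disjoint_diag_offDiag _), sum_diag]
  rfl

section probMatrixPMF

variable {n : ℕ} (p : Finset (Fin n) → ℝ)

lemma trace_probMatrixPMF : (probMatrixPMF p).trace = ∑ S, p S * S.card := by
  simp only [trace, Matrix.diag, probMatrixPMF, and_self]
  rw [sum_comm]
  simp [sum_ite_mem, mul_comm]

lemma sum_probMatrixPMF : ∑ i, ∑ j, probMatrixPMF p i j = ∑ S, p S * (S.card : ℝ) ^ 2 := by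
  unfold probMatrixPMF
  calc _ = ∑ i : Fin n, ∑ S : Finset (Fin n), ∑ j : Fin n,
        if i ∈ S ∧ j ∈ S then p S else 0 := sum_congr rfl fun _ _ => sum_comm
    _ = _ := by
      rw [sum_comm]
      refine sum_congr rfl fun S _ => ?_
      simp [ite_and, sum_ite_mem]
      ring

variable {p} (hdu : ∀ S₁ S₂ : Finset (Fin n), S₁.card = S₂.card → p S₁ = p S₂)
include hdu

lemma probMatrixPMF_perm_apply (σ : Equiv.Perm (Fin n)) (i j : Fin n) :
    probMatrixPMF p (σ i) (σ j) = probMatrixPMF p i j := by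
  refine (Fintype.sum_equiv (Equiv.finsetCongr σ) _ _ fun S => ?_).symm
  simp only [Equiv.finsetCongr_apply, mem_map_equiv, Equiv.symm_apply_apply]
  split_ifs
  · exact hdu _ _ (card_map _).symm
  · rfl

lemma probMatrixPMF_apply_self (i : Fin n) :
    probMatrixPMF p i i = (∑ S, p S * S.card) / n := by
  have hdiag (k : Fin n) : probMatrixPMF p k k = probMatrixPMF p i i := by
    simpa using probMatrixPMF_perm_apply hdu (Equiv.swap i k) i i
  have hn : (n : ℝ) ≠ 0 := by exact_mod_cast i.pos.ne'
  rw [eq_div_iff hn, ← trace_probMatrixPMF]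
  simp only [trace, Matrix.diag]
  rw [sum_congr rfl fun k _ => hdiag k, sum_const, card_univ, Fintype.card_fin, nsmul_eq_mul,
    mul_comm]

lemma probMatrixPMF_apply_of_ne {i j : Fin n} (hij : i ≠ j) :
    probMatrixPMF p i j =
      (∑ S, p S * (S.card : ℝ) ^ 2 - ∑ S, p S * S.card) / (n * (n - 1)) := by
  have hoff : ∀ x ∈ (univ : Finset (Fin n)).offDiag,
      probMatrixPMF p x.1 x.2 = probMatrixPMF p i j := by
    rintro ⟨k, l⟩ hkl
    obtain ⟨σ, rfl, rfl⟩ :=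
      Equiv.Perm.exists_apply_eq_and_apply_eq hij (mem_offDiag.mp hkl).2.2
    exact probMatrixPMF_perm_apply hdu σ i j
  have hn : 1 < n := by simpa using Fintype.one_lt_card_iff.mpr ⟨i, j, hij⟩
  have hn' : (n : ℝ) * (n - 1) ≠ 0 := by
    have : (1 : ℝ) < n := by exact_mod_cast hn
    positivity
  rw [eq_div_iff hn', ← sum_probMatrixPMF, ← trace_probMatrixPMF,
    Matrix.sum_sum_eq_trace_add_sum_offDiag, sum_congr rfl hoff, sum_const, offDiag_card, card_univ, Fintype.card_fin, nsmul_eq_mul,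
    Nat.cast_sub (Nat.le_mul_self n)]
  push_cast
  ring

end probMatrixPMF

lemma sum_mul_card_sq_eq_zero {n : ℕ} {p : Finset (Fin n) → ℝ} (hp0 : ∀ S, 0 ≤ p S)
    (h : ∑ S, p S * (S.card : ℝ) = 0) : ∑ S, p S * (S.card : ℝ) ^ 2 = 0 := by
  have h' := (sum_eq_zero_iff_of_nonneg fun S _ => mul_nonneg (hp0 S) S.card.cast_nonneg).mp h
  exact sum_eq_zero fun S hS => by rw [pow_two, ← mul_assoc, h' S hS, zero_mul]

theorem probMatrix_doublyUniform_general
    {n : ℕ} (p : Finset (Fin n) → ℝ)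
    (hp0 : ∀ S, 0 ≤ p S)
    (hdu : ∀ S₁ S₂ : Finset (Fin n), S₁.card = S₂.card → p S₁ = p S₂) :
    probMatrixPMF p =
      ((∑ S : Finset (Fin n), p S * S.card) / n) •
        ((1 - ((∑ S : Finset (Fin n), p S * (S.card : ℝ) ^ 2) /
              (∑ S : Finset (Fin n), p S * S.card) - 1) / (max (n - 1) 1 : ℕ)) •
            (1 : Matrix (Fin n) (Fin n) ℝ) +
          (((∑ S : Finset (Fin n), p S * (S.card : ℝ) ^ 2) /
              (∑ S : Finset (Fin n), p S * S.card) - 1) / (max (n - 1) 1 : ℕ)) •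
            (Matrix.of fun _ _ => (1:ℝ) : Matrix (Fin n) (Fin n) ℝ)) := by
  ext i j
  simp only [Matrix.smul_apply, Matrix.add_apply, of_apply, smul_eq_mul]
  rcases eq_or_ne i j with rfl | hij
  · rw [probMatrixPMF_apply_self hdu, one_apply_eq]
    ring
  · have hn : 1 < n := by simpa using Fintype.one_lt_card_iff.mpr ⟨i, j, hij⟩
    rw [probMatrixPMF_apply_of_ne hdu hij, one_apply_ne hij, max_eq_left (by omega),
      Nat.cast_sub hn.le, Nat.cast_one, ← div_div]
    set E₁ := ∑ S : Finset (Fin n), p S * (S.card : ℝ)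
    set E₂ := ∑ S : Finset (Fin n), p S * (S.card : ℝ) ^ 2
    -- if `E₁ = 0` then also `E₂ = 0`, so the junk value `E₂ / 0 = 0` does no harm
    have hE : E₁ * (E₂ / E₁) = E₂ := mul_div_cancel_of_imp' (sum_mul_card_sq_eq_zero hp0)
    generalize E₂ / E₁ = r at hE ⊢
    rw [← hE]
    ring

theorem probMatrix_doublyUniform
    {n : ℕ} (p : Finset (Fin n) → ℝ)
    (hp0 : ∀ S, 0 ≤ p S) (hp1 : ∑ S : Finset (Fin n), p S = 1)
    (hdu : ∀ S₁ S₂ : Finset (Fin n), S₁.card = S₂.card → p S₁ = p S₂)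
    (hnil : p ∅ ≠ 1) :
    probMatrixPMF p =
      ((∑ S : Finset (Fin n), p S * S.card) / n) •
        ((1 - ((∑ S : Finset (Fin n), p S * (S.card : ℝ) ^ 2) /
              (∑ S : Finset (Fin n), p S * S.card) - 1) / (max (n - 1) 1 : ℕ)) •
            (1 : Matrix (Fin n) (Fin n) ℝ) +
          (((∑ S : Finset (Fin n), p S * (S.card : ℝ) ^ 2) /
              (∑ S : Finset (Fin n), p S * S.card) - 1) / (max (n - 1) 1 : ℕ)) •
            (Matrix.of fun _ _ => (1:ℝ) : Matrix (Fin n) (Fin n) ℝ)) :=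
  probMatrix_doublyUniform_general p hp0 hdu
end

section
/- For any x ∈ R^n, the normalized largest eigenvalue of the rank-one matrix xx^T equals the number of nonzero entries of x: λ'(xx^T) = |{i : x_i ≠ 0}|, where λ'(M) = max{ h^T M h : h^T Diag(M) h ≤ 1 }. -/
open Finset Matrix BigOperators

/-- Normalized largest eigenvalue: `λ′(M) = sup { hᵀ M h : hᵀ Diag(M) h ≤ 1 }`. -/
noncomputable def lambdaPrime {n : ℕ} (M : Matrix (Fin n) (Fin n) ℝ) : ℝ :=
  sSup {r : ℝ | ∃ h : Fin n → ℝ,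
    h ⬝ᵥ (Matrix.diagonal fun i => M i i).mulVec h ≤ 1 ∧ r = h ⬝ᵥ M.mulVec h}

/-!
For `M = x xᵀ` the constraint reads `∑ (xᵢ hᵢ)² ≤ 1` and the objective is `(x ⬝ h)²`, a sum over
the `k` indices with `xᵢ ≠ 0`. Cauchy–Schwarz on those `k` terms bounds the objective by `k`, and
equality holds for `xᵢ hᵢ = 1/√k` on the support.
-/

section RankOne

variable {ι : Type*} [Fintype ι]

lemma dotProduct_vecMulVec_self_mulVec {R : Type*} [CommSemiring R] (x h : ι → R) :
    h ⬝ᵥ vecMulVec x x *ᵥ h = (x ⬝ᵥ h) ^ 2 := by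
  rw [vecMulVec_mulVec, op_smul_eq_smul, dotProduct_smul, smul_eq_mul, dotProduct_comm, sq]

lemma dotProduct_diagonal_vecMulVec_self_mulVec [DecidableEq ι] {R : Type*} [CommSemiring R]
    (x h : ι → R) :
    h ⬝ᵥ diagonal (fun i => vecMulVec x x i i) *ᵥ h = ∑ i, (x i * h i) ^ 2 := by
  simp only [mulVec_diagonal, dotProduct, vecMulVec_apply]
  exact sum_congr rfl fun i _ => by ring

lemma sq_dotProduct_le_card_support_mul {K : Type*} [Field K] [LinearOrder K]
    [IsStrictOrderedRing K] (x h : ι → K) :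
    (x ⬝ᵥ h) ^ 2 ≤ #{i | x i ≠ 0} * ∑ i, (x i * h i) ^ 2 := by
  have hsupp : x ⬝ᵥ h = ∑ i with x i ≠ 0, x i * h i :=
    (sum_filter_of_ne fun i _ hi => left_ne_zero_of_mul hi).symm
  rw [hsupp]
  refine (sq_sum_le_card_mul_sum_sq ..).trans ?_
  gcongr
  exact subset_univ _

lemma mul_inv_self_eq_ite {K : Type*} [DivisionRing K] [DecidableEq K] (a : K) :
    a * a⁻¹ = if a ≠ 0 then 1 else 0 := by
  split_ifs with ha
  · exact mul_inv_cancel₀ ha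
  · simp [not_not.mp ha]

-- `(x i)⁻¹ = 0` off the support, so `x i * (x i)⁻¹` is the indicator of the support.
lemma dotProduct_inv_div_sqrt (x : ι → ℝ) :
    x ⬝ᵥ (fun i => (x i)⁻¹ / √(#{i | x i ≠ 0} : ℝ)) = √(#{i | x i ≠ 0} : ℝ) := by
  simp only [dotProduct, ← mul_div_assoc, ← sum_div, mul_inv_self_eq_ite, sum_boole]
  exact Real.div_sqrt

lemma sum_sq_mul_inv_div_sqrt_le_one (x : ι → ℝ) :
    ∑ i, (x i * ((x i)⁻¹ / √(#{i | x i ≠ 0} : ℝ))) ^ 2 ≤ 1 := by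
  simp only [← mul_div_assoc, div_pow, ← sum_div, mul_inv_self_eq_ite, ite_pow, one_pow,
    ne_eq, OfNat.ofNat_ne_zero, not_false_eq_true, zero_pow, sum_boole]
  rw [Real.sq_sqrt (Nat.cast_nonneg _)]
  exact div_self_le_one _

end RankOne

theorem lambdaPrime_rank_one_general {n : ℕ} (x : Fin n → ℝ) :
    lambdaPrime (Matrix.vecMulVec x x) =
      (Finset.univ.filter (fun i => x i ≠ 0)).card := by
  refine IsGreatest.csSup_eq ⟨?_, ?_⟩
  · refine ⟨fun i => (x i)⁻¹ / √(#{i | x i ≠ 0} : ℝ), ?_, ?_⟩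
    · rw [dotProduct_diagonal_vecMulVec_self_mulVec]
      exact sum_sq_mul_inv_div_sqrt_le_one x
    · rw [dotProduct_vecMulVec_self_mulVec, dotProduct_inv_div_sqrt,
        Real.sq_sqrt (Nat.cast_nonneg _)]
  · rintro r ⟨h, hdiag, rfl⟩
    rw [dotProduct_diagonal_vecMulVec_self_mulVec] at hdiag
    rw [dotProduct_vecMulVec_self_mulVec]
    calc (x ⬝ᵥ h) ^ 2 ≤ #{i | x i ≠ 0} * ∑ i, (x i * h i) ^ 2 :=
          sq_dotProduct_le_card_support_mul x h
      _ ≤ #{i | x i ≠ 0} := mul_le_of_le_one_right (Nat.cast_nonneg _) hdiag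

theorem lambdaPrime_rank_one {n : ℕ} (x : Fin n → ℝ) (hx : x ≠ 0) :
    lambdaPrime (Matrix.vecMulVec x x) =
      (Finset.univ.filter (fun i => x i ≠ 0)).card :=
  lambdaPrime_rank_one_general x
end

section
/- Let Ŝ be a sampling of [n] which is not nil (Prob(Ŝ ≠ ∅) > 0). Then λ'(P(Ŝ)) ≥ E[|Ŝ|²]/E[|Ŝ|] ≥ 1, where λ'(M) = sup{ h^T M h : h^T Diag(M) h ≤ 1 }. -/
open Finset Matrix BigOperators

noncomputable def probMatrix {n : ℕ} {Ω : Type*} [Fintype Ω]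
    (w : Ω → ℝ) (Shat : Ω → Finset (Fin n)) : Matrix (Fin n) (Fin n) ℝ :=
  fun i j => ∑ ω, if i ∈ Shat ω ∧ j ∈ Shat ω then w ω else 0

lemma quad_eq {n : ℕ} {Ω : Type*} [Fintype Ω]
    (w : Ω → ℝ) (Shat : Ω → Finset (Fin n)) (h : Fin n → ℝ) :
    h ⬝ᵥ (probMatrix w Shat).mulVec h = ∑ ω, w ω * (∑ i ∈ Shat ω, h i) ^ 2 := by
  simp only [dotProduct, mulVec, probMatrix, Finset.mul_sum, Finset.sum_mul,
    ite_mul, mul_ite, mul_zero, zero_mul]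
  rw [Finset.sum_comm]
  trans ∑ y : Fin n, ∑ ω : Ω, ∑ x : Fin n,
      (if x ∈ Shat ω ∧ y ∈ Shat ω then h x * (w ω * h y) else 0)
  · exact Finset.sum_congr rfl fun y _ => Finset.sum_comm
  rw [Finset.sum_comm]
  refine Finset.sum_congr rfl fun ω _ => ?_
  have key : ∀ y x : Fin n, (if x ∈ Shat ω ∧ y ∈ Shat ω then h x * (w ω * h y) else 0)
      = (if x ∈ Shat ω then h x else 0) * (w ω * (if y ∈ Shat ω then h y else 0)) := by
    intro y x; by_cases hx : x ∈ Shat ω <;> by_cases hy : y ∈ Shat ω <;> simp [hx, hy]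
  simp_rw [key, ← Finset.sum_mul, ← Finset.mul_sum, Finset.sum_ite_mem, Finset.univ_inter]
  ring

lemma diag_eq {n : ℕ} {Ω : Type*} [Fintype Ω]
    (w : Ω → ℝ) (Shat : Ω → Finset (Fin n)) (h : Fin n → ℝ) :
    h ⬝ᵥ (Matrix.diagonal fun i => probMatrix w Shat i i).mulVec h
      = ∑ ω, w ω * ∑ i ∈ Shat ω, (h i) ^ 2 := by
  simp only [mulVec_diagonal, dotProduct, probMatrix, and_self, Finset.mul_sum,
    Finset.sum_mul, mul_ite, ite_mul, mul_zero, zero_mul]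
  rw [Finset.sum_comm]
  refine Finset.sum_congr rfl fun ω _ => ?_
  have key : ∀ x : Fin n, (if x ∈ Shat ω then h x * (w ω * h x) else 0)
      = (if x ∈ Shat ω then w ω * h x ^ 2 else 0) := by
    intro x
    by_cases hx : x ∈ Shat ω
    · simp [hx]; ring
    · simp [hx]
  simp_rw [key, Finset.sum_ite_mem, Finset.univ_inter]
  try simp [Finset.mul_sum]


theorem lambdaPrime_lower_bound
    {n : ℕ} {Ω : Type*} [Fintype Ω]
    (w : Ω → ℝ) (hw0 : ∀ ω, 0 ≤ w ω) (hw1 : ∑ ω, w ω = 1)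
    (Shat : Ω → Finset (Fin n))
    (hnotnil : 0 < ∑ ω, if Shat ω ≠ ∅ then w ω else 0) :
    1 ≤ (∑ ω, w ω * ((Shat ω).card : ℝ) ^ 2) / (∑ ω, w ω * ((Shat ω).card : ℝ)) ∧
      (∑ ω, w ω * ((Shat ω).card : ℝ) ^ 2) / (∑ ω, w ω * ((Shat ω).card : ℝ)) ≤
        lambdaPrime (probMatrix w Shat) := by
  set E1 := ∑ ω, w ω * ((Shat ω).card : ℝ) with hE1
  set E2 := ∑ ω, w ω * ((Shat ω).card : ℝ) ^ 2 with hE2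
  have hE1pos : 0 < E1 := by
    refine lt_of_lt_of_le hnotnil (Finset.sum_le_sum fun ω _ => ?_)
    by_cases hS : Shat ω = ∅
    · simp [hS]
    · have h1 : (1 : ℝ) ≤ (Shat ω).card := by
        have := Finset.card_pos.mpr (Finset.nonempty_of_ne_empty hS)
        exact_mod_cast this
      simp only [hS, if_neg, ne_eq, not_true_eq_false, not_false_eq_true, if_true]
      nlinarith [hw0 ω]
  have hE12 : E1 ≤ E2 := by
    refine Finset.sum_le_sum fun ω _ => ?_
    have : ((Shat ω).card : ℝ) ≤ ((Shat ω).card : ℝ) ^ 2 := by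
      rcases Nat.eq_zero_or_pos (Shat ω).card with h | h
      · simp [h]
      · have h1 : (1:ℝ) ≤ (Shat ω).card := by exact_mod_cast h
        nlinarith
    nlinarith [hw0 ω]
  constructor
  · rw [le_div_iff₀ hE1pos]; linarith
  · -- membership and boundedness
    set h0 : Fin n → ℝ := fun _ => (Real.sqrt E1)⁻¹ with hh0
    have hsq : (Real.sqrt E1)⁻¹ ^ 2 = E1⁻¹ := by
      rw [← Real.sqrt_inv, Real.sq_sqrt (by positivity)]
    have hdiag : h0 ⬝ᵥ (Matrix.diagonal fun i => probMatrix w Shat i i).mulVec h0 = 1 := by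
      rw [diag_eq]
      simp only [hh0, Finset.sum_const, nsmul_eq_mul, hsq]
      rw [show (∑ ω, w ω * (((Shat ω).card : ℝ) * E1⁻¹)) = (∑ ω, w ω * ((Shat ω).card : ℝ)) * E1⁻¹ by
        rw [Finset.sum_mul]; exact Finset.sum_congr rfl fun ω _ => by ring]
      rw [← hE1, mul_inv_cancel₀ hE1pos.ne']
    have hquad : h0 ⬝ᵥ (probMatrix w Shat).mulVec h0 = E2 / E1 := by
      rw [quad_eq]
      simp only [hh0, Finset.sum_const, nsmul_eq_mul]
      rw [show (∑ ω, w ω * (((Shat ω).card : ℝ) * (Real.sqrt E1)⁻¹) ^ 2)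
          = (∑ ω, w ω * ((Shat ω).card : ℝ) ^ 2) * E1⁻¹ by
        rw [Finset.sum_mul]; refine Finset.sum_congr rfl fun ω _ => ?_
        rw [mul_pow, hsq]; ring]
      rw [← hE2, div_eq_mul_inv]
    have hbdd : BddAbove {r : ℝ | ∃ h : Fin n → ℝ,
        h ⬝ᵥ (Matrix.diagonal fun i => probMatrix w Shat i i).mulVec h ≤ 1 ∧
        r = h ⬝ᵥ (probMatrix w Shat).mulVec h} := by
      refine ⟨n, fun r hr => ?_⟩
      obtain ⟨h, hle, rfl⟩ := hr
      rw [quad_eq]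
      rw [diag_eq] at hle
      calc ∑ ω, w ω * (∑ i ∈ Shat ω, h i) ^ 2
          ≤ ∑ ω, w ω * ((n : ℝ) * ∑ i ∈ Shat ω, (h i) ^ 2) := by
            refine Finset.sum_le_sum fun ω _ => ?_
            refine mul_le_mul_of_nonneg_left ?_ (hw0 ω)
            calc (∑ i ∈ Shat ω, h i) ^ 2
                ≤ ((Shat ω).card : ℝ) * ∑ i ∈ Shat ω, (h i) ^ 2 :=
                  sq_sum_le_card_mul_sum_sq
              _ ≤ (n : ℝ) * ∑ i ∈ Shat ω, (h i) ^ 2 := by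
                  refine mul_le_mul_of_nonneg_right ?_ (Finset.sum_nonneg fun i _ => sq_nonneg _)
                  exact_mod_cast Finset.card_le_card (Finset.subset_univ _) |>.trans_eq
                    (by simp)
        _ = (n : ℝ) * ∑ ω, w ω * ∑ i ∈ Shat ω, (h i) ^ 2 := by
            rw [Finset.mul_sum]; exact Finset.sum_congr rfl fun ω _ => by ring
        _ ≤ (n : ℝ) * 1 := by
            refine mul_le_mul_of_nonneg_left hle (by positivity)
        _ = n := mul_one _
    refine le_csSup hbdd ?_
    exact ⟨h0, hdiag.le, hquad.symm⟩
end

section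
/- Let Ŝ be a sampling of [n] and τ a constant with |Ŝ| ≤ τ almost surely. Then P(Ŝ) ⪯ τ · Diag(P(Ŝ)) in the positive semidefinite order; equivalently λ'(P(Ŝ)) ≤ τ. -/
/-!
For every vector `h`, the quadratic forms of `P(Ŝ)` and of `Diag(P(Ŝ))` average over the
outcomes `S` of the sampling the quantities `(∑_{i ∈ S} hᵢ)²` and `∑_{i ∈ S} hᵢ²`. By
Cauchy–Schwarz the first is at most `|S| ≤ τ` times the second, for every outcome of positive
probability, so `hᵀ P(Ŝ) h ≤ τ · hᵀ Diag(P(Ŝ)) h`. This is the semidefinite inequality, and it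
bounds every element of the set whose supremum is `λ'(P(Ŝ))` by `τ`.
-/

open Finset Matrix BigOperators

theorem Finset.sq_sum_le_mul_sum_sq_of_card_le {ι : Type*} {s : Finset ι} {τ : ℕ}
    (hs : #s ≤ τ) (f : ι → ℝ) : (∑ i ∈ s, f i) ^ 2 ≤ τ * ∑ i ∈ s, f i ^ 2 :=
  sq_sum_le_card_mul_sum_sq.trans <|
    mul_le_mul_of_nonneg_right (by exact_mod_cast hs) (sum_nonneg fun i _ => sq_nonneg (f i))

theorem Matrix.posSemidef_sub_of_dotProduct_mulVec_le {m : Type*} [Fintype m]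
    {A B : Matrix m m ℝ} (hA : A.IsHermitian) (hB : B.IsHermitian)
    (hBA : ∀ x, x ⬝ᵥ B *ᵥ x ≤ x ⬝ᵥ A *ᵥ x) : (A - B).PosSemidef :=
  .of_dotProduct_mulVec_nonneg (hA.sub hB) fun x => by
    simpa only [star_trivial, sub_mulVec, dotProduct_sub, sub_nonneg] using hBA x

theorem lambdaPrime_le_of_dotProduct_mulVec_le {n : ℕ} {M : Matrix (Fin n) (Fin n) ℝ} {c : ℝ}
    (hc : 0 ≤ c) (hM : ∀ h, h ⬝ᵥ M *ᵥ h ≤ c * (h ⬝ᵥ diagonal (fun i => M i i) *ᵥ h)) :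
    lambdaPrime M ≤ c := by
  refine Real.sSup_le ?_ hc
  rintro r ⟨h, hDh, rfl⟩
  calc h ⬝ᵥ M *ᵥ h ≤ c * (h ⬝ᵥ diagonal (fun i => M i i) *ᵥ h) := hM h
    _ ≤ c * 1 := mul_le_mul_of_nonneg_left hDh hc
    _ = c := mul_one c

section probMatrix

variable {n : ℕ} {Ω : Type*} [Fintype Ω] (w : Ω → ℝ) (Shat : Ω → Finset (Fin n))

theorem probMatrix_isHermitian : (probMatrix w Shat).IsHermitian := by
  ext i j
  simp [probMatrix, and_comm]

theorem dotProduct_probMatrix_mulVec (h : Fin n → ℝ) :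
    h ⬝ᵥ probMatrix w Shat *ᵥ h = ∑ ω, w ω * (∑ i ∈ Shat ω, h i) ^ 2 :=
  calc h ⬝ᵥ probMatrix w Shat *ᵥ h
      = ∑ i, ∑ j, ∑ ω, if i ∈ Shat ω ∧ j ∈ Shat ω then w ω * (h i * h j) else 0 := by
        simp only [dotProduct, mulVec, probMatrix, sum_mul, mul_sum]
        refine sum_congr rfl fun i _ => sum_congr rfl fun j _ => sum_congr rfl fun ω _ => ?_
        split_ifs <;> ring
    _ = ∑ ω, ∑ i ∈ Shat ω, ∑ j ∈ Shat ω, w ω * (h i * h j) := by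
        rw [sum_comm_cycle]
        simp only [ite_and, sum_ite_irrel, sum_const_zero, ← sum_filter, filter_mem_eq_inter,
          univ_inter]
    _ = ∑ ω, w ω * (∑ i ∈ Shat ω, h i) ^ 2 := by
        refine sum_congr rfl fun ω _ => ?_
        rw [sq, sum_mul_sum, mul_sum]
        simp only [mul_sum]

theorem dotProduct_diagonal_probMatrix_mulVec (h : Fin n → ℝ) :
    h ⬝ᵥ diagonal (fun i => probMatrix w Shat i i) *ᵥ h = ∑ ω, w ω * ∑ i ∈ Shat ω, h i ^ 2 := by
  simp only [dotProduct, mulVec_diagonal, probMatrix, and_self, mul_sum, sum_mul]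
  rw [sum_comm]
  refine sum_congr rfl fun ω _ => ?_
  simp only [mul_ite, ite_mul, mul_zero, zero_mul, ← sum_filter, filter_mem_eq_inter,
    univ_inter]
  exact sum_congr rfl fun i _ => by ring

theorem dotProduct_probMatrix_mulVec_le {τ : ℕ} (hw0 : ∀ ω, 0 ≤ w ω)
    (hcard : ∀ ω, w ω ≠ 0 → #(Shat ω) ≤ τ) (h : Fin n → ℝ) :
    h ⬝ᵥ probMatrix w Shat *ᵥ h ≤ τ * (h ⬝ᵥ diagonal (fun i => probMatrix w Shat i i) *ᵥ h) := by
  rw [dotProduct_probMatrix_mulVec, dotProduct_diagonal_probMatrix_mulVec, mul_sum]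
  refine sum_le_sum fun ω _ => ?_
  rcases eq_or_ne (w ω) 0 with hw | hw
  · simp [hw]
  · rw [mul_left_comm]
    exact mul_le_mul_of_nonneg_left (sq_sum_le_mul_sum_sq_of_card_le (hcard ω hw) h) (hw0 ω)

end probMatrix

theorem probMatrix_le_tau_diag_general
    {n : ℕ} {Ω : Type*} [Fintype Ω]
    (w : Ω → ℝ) (hw0 : ∀ ω, 0 ≤ w ω)
    (Shat : Ω → Finset (Fin n)) (τ : ℕ)
    (hcard : ∀ ω, w ω ≠ 0 → (Shat ω).card ≤ τ) :
    (((τ : ℝ) • Matrix.diagonal (fun i => probMatrix w Shat i i)) -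
        probMatrix w Shat).PosSemidef ∧
      lambdaPrime (probMatrix w Shat) ≤ τ := by
  have hle := dotProduct_probMatrix_mulVec_le w Shat hw0 hcard
  refine ⟨?_, lambdaPrime_le_of_dotProduct_mulVec_le (Nat.cast_nonneg τ) hle⟩
  refine posSemidef_sub_of_dotProduct_mulVec_le
    ((isHermitian_diagonal _).smul (IsSelfAdjoint.all _)) (probMatrix_isHermitian w Shat)
    fun x => ?_
  simpa only [smul_mulVec, dotProduct_smul, smul_eq_mul] using hle x

theorem probMatrix_le_tau_diag
    {n : ℕ} {Ω : Type*} [Fintype Ω]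
    (w : Ω → ℝ) (hw0 : ∀ ω, 0 ≤ w ω) (hw1 : ∑ ω, w ω = 1)
    (Shat : Ω → Finset (Fin n)) (τ : ℕ)
    (hcard : ∀ ω, w ω ≠ 0 → (Shat ω).card ≤ τ) :
    (((τ : ℝ) • Matrix.diagonal (fun i => probMatrix w Shat i i)) -
        probMatrix w Shat).PosSemidef ∧
      lambdaPrime (probMatrix w Shat) ≤ τ :=
  probMatrix_le_tau_diag_general w hw0 Shat τ hcard
end

section
/- If M₁ and M₂ are positive semidefinite n×n matrices, then λ'(M₁ ∘ M₂) ≤ min{λ'(M₁), λ'(M₂)}, where ∘ is the Hadamard product and λ'(M) is the smallest constant c such that M ⪯ c·Diag(M). -/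
/-! Hadamard multiplication acts entrywise on diagonals, so
`(c₁ • Diag M₁ - M₁) ⊙ M₂ = c₁ • Diag (M₁ ⊙ M₂) - M₁ ⊙ M₂`, which is positive semidefinite by the
Schur product theorem; so `c₁`, and symmetrically `c₂`, bounds `λ'(M₁ ⊙ M₂)`. -/

open Matrix

namespace Matrix

variable {ι : Type*} [DecidableEq ι]

theorem smul_diagonal_diag_sub_hadamard {α : Type*} [CommRing α] (A B : Matrix ι ι α) (c : α) :
    (c • diagonal A.diag - A) ⊙ B = c • diagonal (A ⊙ B).diag - A ⊙ B := by
  ext i j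
  by_cases hij : i = j
  · subst hij
    simp only [hadamard_apply, sub_apply, smul_apply, diagonal_apply_eq, diag_apply, smul_eq_mul]
    ring
  · simp [hij]

open scoped ComplexOrder in
theorem PosSemidef.smul_diagonal_diag_sub_hadamard {𝕜 : Type*} [RCLike 𝕜]
    {A B : Matrix ι ι 𝕜} {c : 𝕜}
    (hA : (c • diagonal A.diag - A).PosSemidef) (hB : B.PosSemidef) :
    (c • diagonal (A ⊙ B).diag - A ⊙ B).PosSemidef :=
  Matrix.smul_diagonal_diag_sub_hadamard A B c ▸ hA.hadamard hB

end Matrix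

theorem lambdaPrime_hadamard_le_min
    {n : ℕ} (M₁ M₂ : Matrix (Fin n) (Fin n) ℝ)
    (h₁ : M₁.PosSemidef) (h₂ : M₂.PosSemidef) (c₁ c₂ : ℝ)
    (hc₁ : ((c₁ • Matrix.diagonal (fun i => M₁ i i)) - M₁).PosSemidef)
    (hc₂ : ((c₂ • Matrix.diagonal (fun i => M₂ i i)) - M₂).PosSemidef) :
    ((min c₁ c₂ •
        Matrix.diagonal (fun i => (M₁.hadamard M₂) i i)) - M₁.hadamard M₂).PosSemidef := by
  rcases min_choice c₁ c₂ with h | h <;> rw [h]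
  · exact hc₁.smul_diagonal_diag_sub_hadamard h₂
  · rw [hadamard_comm]
    exact hc₂.smul_diagonal_diag_sub_hadamard h₁
end
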